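/- arXiv:1212.0224 — 4 statements merged into one kernel-verified Lean document; each statement's English description precedes it below -/
import Mathlib

section
/- Let G be a digraph with capacities c, disjoint terminal sets S', T', with c Eulerian outside S' ∪ T'. Let f be a maximum-value S'–T' flow saturating an (S',T')-cut (X, V∖X), i.e., f(a) = c(a) for all a ∈ δ⁺(X) and f(a) = 0 for all a ∈ δ⁻(X). Then the flow g := c − f has value c(δ⁺(V∖X)) and saturates the reversed cut (V∖X, X): g(a) = c(a) for all a ∈ δ⁺(V∖X) and g(a) = 0 for a ∈ δ⁻(V∖X). -/
open Finset

/-- A directed network: arcs, terminals, integer capacities. -/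
structure Network (V : Type*) [Fintype V] [DecidableEq V] where
  A : Finset (V × V)
  S : Finset V
  c : V × V → ℕ

variable {V : Type*} [Fintype V] [DecidableEq V]

/-- Arcs leaving `X`. -/
def delOut (N : Network V) (X : Finset V) : Finset (V × V) :=
  N.A.filter fun a => a.1 ∈ X ∧ a.2 ∉ X

/-- Arcs entering `X`. -/
def delIn (N : Network V) (X : Finset V) : Finset (V × V) :=
  N.A.filter fun a => a.1 ∉ X ∧ a.2 ∈ X

/-- Capacity of the cut `δ⁺(X)`. -/
def cOut (N : Network V) (X : Finset V) : ℕ := ∑ e ∈ delOut N X, N.c e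

/-- Capacity of the cut `δ⁻(X)`. -/
def cIn (N : Network V) (X : Finset V) : ℕ := ∑ e ∈ delIn N X, N.c e

/-- Consecutive pairs (arcs) of a vertex list. -/
def arcsOf (l : List V) : List (V × V) := l.zip l.tail

variable [Inhabited V]

/-- An `S`-path: nonempty directed path whose endpoints are distinct terminals. -/
def IsSPath (N : Network V) (l : List V) : Prop :=
  l ≠ [] ∧ l.Chain' (fun u v => (u, v) ∈ N.A) ∧
    l.headI ∈ N.S ∧ l.getLastI ∈ N.S ∧ l.headI ≠ l.getLastI

/-- A multiflow: a nonnegative real on each `S`-path, with finite support. -/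
structure Multiflow (N : Network V) where
  Ps : Finset (List V)
  F : List V → ℝ
  nonneg : ∀ P, 0 ≤ F P
  mem_paths : ∀ P ∈ Ps, IsSPath N P
  zero_off : ∀ P ∉ Ps, F P = 0

/-- Total flow through arc `a`. -/
def flowOn {N : Network V} (M : Multiflow N) (a : V × V) : ℝ :=
  ∑ P ∈ M.Ps, M.F P * ((arcsOf P).count a : ℝ)

/-- Feasibility of a multiflow. -/
def Feasible {N : Network V} (M : Multiflow N) : Prop :=
  ∀ a ∈ N.A, flowOn M a ≤ (N.c a : ℝ)

/-- Number of times the list `P` crosses the cut `(X, V∖X)`. -/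
def crossCount (N : Network V) (X : Finset V) (P : List V) : ℕ :=
  ((arcsOf P).filter fun a => a ∈ delOut N X ∨ a ∈ delIn N X).length

/-- `M` saturates the cut `(X, V∖X)`. -/
def Saturates {N : Network V} (M : Multiflow N) (X : Finset V) : Prop :=
  (∀ P ∈ M.Ps, 0 < M.F P → crossCount N X P ≤ 1) ∧
  ∀ e ∈ delOut N X, flowOn M e = (N.c e : ℝ)

/-- The `μ`-value of a multiflow. -/
def muValue {N : Network V} (M : Multiflow N) (μ : V → V → ℝ) : ℝ :=
  ∑ P ∈ M.Ps, μ P.headI P.getLastI * M.F P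

/-- Total value of a multiflow. -/
def mfValue {N : Network V} (M : Multiflow N) : ℝ := ∑ P ∈ M.Ps, M.F P

/-- Divergence of an integer-valued arc function at a vertex. -/
def divg (N : Network V) (h : V × V → ℤ) (v : V) : ℤ :=
  ∑ e ∈ delOut N {v}, h e - ∑ e ∈ delIn N {v}, h e

lemma sum_out (N : Network V) (h : V × V → ℤ) (Y : Finset V) :
    ∑ v ∈ Y, ∑ e ∈ delOut N {v}, h e
      = ∑ e ∈ N.A.filter (fun e => e.1 ∈ Y ∧ e.2 ≠ e.1), h e := by
  simp only [delOut, Finset.sum_filter, Finset.mem_singleton]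
  rw [Finset.sum_comm]
  refine Finset.sum_congr rfl fun e _ => ?_
  have : ∀ v ∈ Y, (if e.1 = v ∧ ¬ e.2 = v then h e else 0)
      = (if v = e.1 then (if e.2 = e.1 then 0 else h e) else 0) := by
    intro v _
    by_cases hv : v = e.1 <;> by_cases h2 : e.2 = e.1 <;> subst_vars <;> simp_all <;>
      intro h1 <;> exact absurd h1.symm hv
  rw [Finset.sum_congr rfl this, Finset.sum_ite_eq' Y e.1]
  split_ifs <;> simp_all

lemma sum_in (N : Network V) (h : V × V → ℤ) (Y : Finset V) :
    ∑ v ∈ Y, ∑ e ∈ delIn N {v}, h e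
      = ∑ e ∈ N.A.filter (fun e => e.2 ∈ Y ∧ e.1 ≠ e.2), h e := by
  simp only [delIn, Finset.sum_filter, Finset.mem_singleton]
  rw [Finset.sum_comm]
  refine Finset.sum_congr rfl fun e _ => ?_
  have : ∀ v ∈ Y, (if ¬ e.1 = v ∧ e.2 = v then h e else 0)
      = (if v = e.2 then (if e.1 = e.2 then 0 else h e) else 0) := by
    intro v _
    by_cases hv : v = e.2 <;> by_cases h2 : e.1 = e.2 <;> subst_vars <;> simp_all <;>
      intro h1 h2' <;> exact absurd h2'.symm hv
  rw [Finset.sum_congr rfl this, Finset.sum_ite_eq' Y e.2]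
  split_ifs <;> simp_all

lemma sum_divg (N : Network V) (h : V × V → ℤ) (Y : Finset V) :
    ∑ v ∈ Y, divg N h v =
      ∑ e ∈ delOut N Y, h e - ∑ e ∈ delIn N Y, h e := by
  unfold divg
  rw [Finset.sum_sub_distrib, sum_out, sum_in]
  have hsplit1 : N.A.filter (fun e => e.1 ∈ Y ∧ e.2 ≠ e.1)
      = delOut N Y ∪ N.A.filter (fun e => e.1 ∈ Y ∧ e.2 ∈ Y ∧ e.2 ≠ e.1) := by
    ext e
    simp only [delOut, Finset.mem_union, Finset.mem_filter]
    constructor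
    · rintro ⟨hA, h1, hne⟩
      by_cases h2 : e.2 ∈ Y
      · exact Or.inr ⟨hA, h1, h2, hne⟩
      · exact Or.inl ⟨hA, h1, h2⟩
    · rintro (⟨hA, h1, h2⟩ | ⟨hA, h1, h2, hne⟩)
      · exact ⟨hA, h1, fun he => h2 (he ▸ h1)⟩
      · exact ⟨hA, h1, hne⟩
  have hsplit2 : N.A.filter (fun e => e.2 ∈ Y ∧ e.1 ≠ e.2)
      = delIn N Y ∪ N.A.filter (fun e => e.1 ∈ Y ∧ e.2 ∈ Y ∧ e.2 ≠ e.1) := by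
    ext e
    simp only [delIn, Finset.mem_union, Finset.mem_filter]
    constructor
    · rintro ⟨hA, h2, hne⟩
      by_cases h1 : e.1 ∈ Y
      · exact Or.inr ⟨hA, h1, h2, fun he => hne he.symm⟩
      · exact Or.inl ⟨hA, h1, h2⟩
    · rintro (⟨hA, h1, h2⟩ | ⟨hA, h1, h2, hne⟩)
      · exact ⟨hA, h2, fun he => h1 (he ▸ h2)⟩
      · exact ⟨hA, h2, fun he => hne he.symm⟩
  have hd1 : Disjoint (delOut N Y) (N.A.filter (fun e => e.1 ∈ Y ∧ e.2 ∈ Y ∧ e.2 ≠ e.1)) := by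
    rw [Finset.disjoint_left]
    intro e he1 he2
    simp only [delOut, Finset.mem_filter] at he1 he2
    exact he1.2.2 he2.2.2.1
  have hd2 : Disjoint (delIn N Y) (N.A.filter (fun e => e.1 ∈ Y ∧ e.2 ∈ Y ∧ e.2 ≠ e.1)) := by
    rw [Finset.disjoint_left]
    intro e he1 he2
    simp only [delIn, Finset.mem_filter] at he1 he2
    exact he1.2.1 he2.2.1
  rw [hsplit1, hsplit2, Finset.sum_union hd1, Finset.sum_union hd2]
  ring

/-- If `f` is a maximum-value `S'`–`T'` flow saturating an
`(S',T')`-cut `(X, V∖X)`, then `g := c − f` has value `c(δ⁺(V∖X))` and saturates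
the reversed cut `(V∖X, X)`. -/
theorem stmt4 (N : Network V) (S' T' : Finset V) (hdisj : Disjoint S' T')
    (hEuler : ∀ v, v ∉ S' → v ∉ T' → cIn N {v} = cOut N {v})
    (f : V × V → ℤ) (hf0 : ∀ a, 0 ≤ f a) (hfc : ∀ a, f a ≤ (N.c a : ℤ))
    (hcons : ∀ v, v ∉ S' → v ∉ T' → divg N f v = 0)
    (hS : ∀ s ∈ S', 0 ≤ divg N f s) (hT : ∀ t ∈ T', divg N f t ≤ 0)
    (hmax : ∀ f' : V × V → ℤ, (∀ a, 0 ≤ f' a) → (∀ a, f' a ≤ (N.c a : ℤ)) →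
      (∀ v, v ∉ S' → v ∉ T' → divg N f' v = 0) →
      (∀ s ∈ S', 0 ≤ divg N f' s) → (∀ t ∈ T', divg N f' t ≤ 0) →
      ∑ s ∈ S', divg N f' s ≤ ∑ s ∈ S', divg N f s)
    (X : Finset V) (hXS : S' ⊆ X) (hXT : T' ⊆ Xᶜ)
    (hsatOut : ∀ a ∈ delOut N X, f a = (N.c a : ℤ))
    (hsatIn : ∀ a ∈ delIn N X, f a = 0) :
    (∑ t ∈ T', divg N (fun a => (N.c a : ℤ) - f a) t = (cOut N Xᶜ : ℤ)) ∧
    (∀ a ∈ delOut N Xᶜ, (N.c a : ℤ) - f a = (N.c a : ℤ)) ∧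
    (∀ a ∈ delIn N Xᶜ, (N.c a : ℤ) - f a = 0) := by
  have hrevOut : delOut N Xᶜ = delIn N X := by
    ext e; simp [delOut, delIn, Finset.mem_compl]
  have hrevIn : delIn N Xᶜ = delOut N X := by
    ext e; simp [delOut, delIn, Finset.mem_compl]
  refine ⟨?_, ?_, ?_⟩
  · -- value
    set cz : V × V → ℤ := fun a => (N.c a : ℤ) with hcz
    have hgdiv : ∀ t, divg N (fun a => cz a - f a) t = divg N cz t - divg N f t := by
      intro t
      unfold divg
      rw [Finset.sum_sub_distrib, Finset.sum_sub_distrib]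
      ring
    have hXval : ∑ s ∈ S', divg N f s = ∑ e ∈ delOut N X, cz e := by
      rw [Finset.sum_subset hXS (fun v hvX hvS =>
        hcons v hvS (fun hvT => (Finset.mem_compl.mp (hXT hvT)) hvX))]
      rw [sum_divg, Finset.sum_congr rfl hsatOut, Finset.sum_congr rfl hsatIn]
      simp
      rfl
    have huniv : ∑ v ∈ (univ : Finset V), divg N f v = 0 := by
      rw [sum_divg]
      have h1 : delOut N univ = ∅ := by simp [delOut]
      have h2 : delIn N univ = ∅ := by simp [delIn]
      rw [h1, h2]; simp
    have hST : ∑ v ∈ S' ∪ T', divg N f v = 0 := by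
      rw [← huniv]
      exact Finset.sum_subset (Finset.subset_univ _) fun v _ hv =>
        hcons v (fun h => hv (Finset.mem_union_left _ h))
          (fun h => hv (Finset.mem_union_right _ h))
    rw [Finset.sum_union hdisj] at hST
    have hTf : ∑ t ∈ T', divg N f t = - ∑ e ∈ delOut N X, cz e := by
      rw [← hXval]; omega
    have hEulerZ : ∀ v, v ∉ S' → v ∉ T' → divg N cz v = 0 := by
      intro v hvS hvT
      have h := hEuler v hvS hvT
      unfold cIn cOut at h
      unfold divg
      have h1 : ∑ e ∈ delOut N {v}, cz e = ((∑ e ∈ delOut N {v}, N.c e : ℕ) : ℤ) := by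
        push_cast; rfl
      have h2 : ∑ e ∈ delIn N {v}, cz e = ((∑ e ∈ delIn N {v}, N.c e : ℕ) : ℤ) := by
        push_cast; rfl
      rw [h1, h2, h]; ring
    have hTc : ∑ t ∈ T', divg N cz t
        = ∑ e ∈ delOut N Xᶜ, cz e - ∑ e ∈ delIn N Xᶜ, cz e := by
      rw [← sum_divg]
      exact Finset.sum_subset hXT (fun v hvXc hvT =>
        hEulerZ v (fun hvS => (Finset.mem_compl.mp hvXc) (hXS hvS)) hvT)
    have hcast : (cOut N Xᶜ : ℤ) = ∑ e ∈ delOut N Xᶜ, cz e := by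
      unfold cOut; push_cast; rfl
    calc ∑ t ∈ T', divg N (fun a => cz a - f a) t
        = ∑ t ∈ T', (divg N cz t - divg N f t) := Finset.sum_congr rfl fun t _ => hgdiv t
      _ = ∑ t ∈ T', divg N cz t - ∑ t ∈ T', divg N f t := Finset.sum_sub_distrib ..
      _ = (cOut N Xᶜ : ℤ) := by
          rw [hTc, hTf, hcast, hrevIn]; ring
  · intro a ha
    have := hsatIn a (hrevOut ▸ ha)
    omega
  · intro a ha
    have := hsatOut a (hrevIn ▸ ha)
    omega
end

section
/- Let T be a finite tree in which every internal (non-leaf) vertex has degree exactly 3. If T has k ≥ 4 leaves, then there exists an edge e of T, neither of whose endpoints is a leaf, such that deleting e splits T into two subtrees with k₁ and k₂ leaves of T respectively (counting the endpoint of e in each subtree as a new leaf), satisfying k₁ ≤ 2k/3 + 1 and k₂ ≤ 2k/3 + 1. -/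
open Finset

variable {V : Type*} [Fintype V] [DecidableEq V]

/-- The `ℓ`-length of a walk, where `ℓ u v` is the length of the arc `(u,v)`. -/
def wlen {G : SimpleGraph V} (ℓ : V → V → ℝ) : ∀ {x y : V}, G.Walk x y → ℝ
  | _, _, SimpleGraph.Walk.nil => 0
  | _, _, @SimpleGraph.Walk.cons _ _ u v _ _ p => ℓ u v + wlen ℓ p

section StmtFiveAux

open SimpleGraph

set_option linter.unusedSectionVars false
set_option linter.unusedVariables false

lemma tree_not_reach (G : SimpleGraph V) (hT : G.IsTree) {a b : V} (hab : G.Adj a b) :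
    ¬ (G.deleteEdges {s(a,b)}).Reachable a b := by
  have h := (isAcyclic_iff_forall_adj_isBridge.mp hT.IsAcyclic) hab
  rw [isBridge_iff] at h
  exact h

lemma reach_or (G : SimpleGraph V) (hT : G.IsTree) {a b : V} (hab : G.Adj a b) (w : V) :
    (G.deleteEdges {s(a,b)}).Reachable a w ∨ (G.deleteEdges {s(a,b)}).Reachable b w := by
  set H := G.deleteEdges {s(a,b)} with hH
  obtain ⟨p⟩ := hT.isConnected.preconnected a w
  suffices h : ∀ (x y : V) (_ : G.Walk x y),
      (H.Reachable a x ∨ H.Reachable b x) → (H.Reachable a y ∨ H.Reachable b y) by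
    exact h a w p (Or.inl (Reachable.refl a))
  intro x y p
  induction p with
  | nil => exact id
  | @cons x z y hxz q ih =>
    intro hx
    apply ih
    by_cases he : s(x,z) = s(a,b)
    · rw [Sym2.eq, Sym2.rel_iff'] at he
      rcases he with ⟨rfl, rfl⟩ | ⟨rfl, rfl⟩
      · exact Or.inr (Reachable.refl _)
      · exact Or.inl (Reachable.refl _)
    · have hHxz : H.Adj x z := by
        rw [hH, deleteEdges_adj]
        exact ⟨hxz, by simpa using he⟩
      rcases hx with h | h
      · exact Or.inl (h.trans hHxz.reachable)
      · exact Or.inr (h.trans hHxz.reachable)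

lemma reach_not_both (G : SimpleGraph V) (hT : G.IsTree) {a b : V} (hab : G.Adj a b) (w : V) :
    ¬ ((G.deleteEdges {s(a,b)}).Reachable a w ∧ (G.deleteEdges {s(a,b)}).Reachable b w) := by
  rintro ⟨h1, h2⟩
  exact tree_not_reach G hT hab (h1.trans h2.symm)

lemma reach_dist (G : SimpleGraph V) (hT : G.IsTree) {a b : V} (hab : G.Adj a b) {w : V}
    (h : (G.deleteEdges {s(a,b)}).Reachable a w) : G.dist a w < G.dist b w := by
  by_contra hle
  push_neg at hle
  obtain ⟨q, hq, hlen⟩ := hT.isConnected.exists_path_of_dist b w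
  by_cases haq : a ∈ q.support
  · have h1 : 1 ≤ (q.takeUntil a haq).length := by
      have h2 := dist_le (q.takeUntil a haq)
      have h3 : G.dist b a = 1 := dist_eq_one_iff_adj.mpr hab.symm
      omega
    have h2 : G.dist a w ≤ (q.dropUntil a haq).length := dist_le _
    have h3 : (q.takeUntil a haq).length + (q.dropUntil a haq).length = q.length := by
      rw [← SimpleGraph.Walk.length_append, q.take_spec haq]
    omega
  · have hedges : ∀ e ∈ q.edges, e ∉ ({s(a,b)} : Set (Sym2 V)) := by
      intro e he hmem
      rw [Set.mem_singleton_iff] at hmem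
      subst hmem
      exact haq (q.fst_mem_support_of_mem_edges he)
    exact reach_not_both G hT hab w ⟨h, ⟨q.toDeleteEdges _ hedges⟩⟩

lemma dist_lt_or_lt (G : SimpleGraph V) (hT : G.IsTree) {a b : V} (hab : G.Adj a b) (w : V) :
    G.dist a w < G.dist b w ∨ G.dist b w < G.dist a w := by
  rcases reach_or G hT hab w with h | h
  · exact Or.inl (reach_dist G hT hab h)
  · have h' : (G.deleteEdges {s(b,a)}).Reachable b w := by rwa [Sym2.eq_swap] at h
    exact Or.inr (reach_dist G hT hab.symm h')

lemma reach_iff_dist (G : SimpleGraph V) (hT : G.IsTree) {a b : V} (hab : G.Adj a b) (w : V) :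
    (G.deleteEdges {s(a,b)}).Reachable a w ↔ G.dist a w < G.dist b w := by
  constructor
  · exact reach_dist G hT hab
  · intro hd
    rcases reach_or G hT hab w with h | h
    · exact h
    · exfalso
      have h' : (G.deleteEdges {s(b,a)}).Reachable b w := by rwa [Sym2.eq_swap] at h
      have := reach_dist G hT hab.symm h'
      omega

lemma dist_adj_le (G : SimpleGraph V) (hT : G.IsTree) {y z : V} (h : G.Adj y z) (x : V) :
    G.dist x z ≤ G.dist x y + 1 := by
  have h1 := hT.isConnected.dist_triangle (u := x) (v := y) (w := z)
  have h2 : G.dist y z = 1 := dist_eq_one_iff_adj.mpr h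
  omega

/-- In a tree, a vertex `v` has at most one neighbor strictly closer to `w`. -/
lemma unique_down (G : SimpleGraph V) (hT : G.IsTree) {v w z1 z2 : V}
    (h1 : G.Adj v z1) (h2 : G.Adj v z2) (hz : z1 ≠ z2)
    (hd1 : G.dist w z1 + 1 = G.dist w v) (hd2 : G.dist w z2 + 1 = G.dist w v) : False := by
  obtain ⟨p1, hp1, hl1⟩ := hT.isConnected.exists_path_of_dist w z1
  obtain ⟨p2, hp2, hl2⟩ := hT.isConnected.exists_path_of_dist w z2
  have hq1 : (p1.concat h1.symm).IsPath := by
    apply SimpleGraph.Walk.isPath_of_length_eq_dist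
    rw [SimpleGraph.Walk.length_concat, hl1, hd1]
  have hq2 : (p2.concat h2.symm).IsPath := by
    apply SimpleGraph.Walk.isPath_of_length_eq_dist
    rw [SimpleGraph.Walk.length_concat, hl2, hd2]
  have heq : p1.concat h1.symm = p2.concat h2.symm :=
    (hT.existsUnique_path w v).unique hq1 hq2
  have hsup : (p1.concat h1.symm).reverse.support = (p2.concat h2.symm).reverse.support := by
    rw [heq]
  rw [SimpleGraph.Walk.reverse_concat, SimpleGraph.Walk.reverse_concat] at hsup
  rw [SimpleGraph.Walk.support_cons, SimpleGraph.Walk.support_cons] at hsup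
  have e1 : p1.reverse.support = z1 :: p1.reverse.support.tail :=
    SimpleGraph.Walk.support_eq_cons _
  have e2 : p2.reverse.support = z2 :: p2.reverse.support.tail :=
    SimpleGraph.Walk.support_eq_cons _
  rw [e1, e2] at hsup
  injection hsup with _ hsup2
  injection hsup2 with hsup3 _
  exact hz hsup3

/-- Every vertex `w ≠ b` has a neighbor strictly closer to `b`. -/
lemma exists_down (G : SimpleGraph V) (hT : G.IsTree) {b w : V} (hbw : b ≠ w) :
    ∃ z, G.Adj z w ∧ G.dist b z + 1 = G.dist b w := by
  obtain ⟨p, hp, hl⟩ := hT.isConnected.exists_path_of_dist b w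
  have hpos : 0 < G.dist b w := by
    rcases Nat.eq_zero_or_pos (G.dist b w) with h | h
    · exact absurd (hT.isConnected.dist_eq_zero_iff.mp h) hbw
    · exact h
  cases hrev : p.reverse with
  | nil =>
    exact absurd rfl hbw
  | @cons _ z _ h q =>
    refine ⟨z, h.symm, ?_⟩
    have hlq : q.length + 1 = G.dist b w := by
      have : p.reverse.length = p.length := SimpleGraph.Walk.length_reverse _
      rw [hrev] at this
      simp only [SimpleGraph.Walk.length_cons] at this
      omega
    have h1 : G.dist b z ≤ q.length := by
      have := dist_le q.reverse
      rwa [SimpleGraph.Walk.length_reverse] at this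
    have h2 : G.dist b w ≤ G.dist b z + 1 := dist_adj_le G hT h.symm b
    omega

lemma down_of_lt (G : SimpleGraph V) (hT : G.IsTree) {c d : V} (h : G.Adj c d) (w : V)
    (hlt : G.dist c w < G.dist d w) : G.dist w c + 1 = G.dist w d := by
  have h1 : G.dist w d ≤ G.dist w c + 1 := dist_adj_le G hT h w
  have e1 : G.dist w d = G.dist d w := SimpleGraph.dist_comm ..
  have e2 : G.dist w c = G.dist c w := SimpleGraph.dist_comm ..
  omega

/-- Each side of an edge of the tree contains a leaf. -/
lemma exists_leaf_side (G : SimpleGraph V) [DecidableRel G.Adj] (hT : G.IsTree)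
    (hdeg : ∀ v : V, G.degree v ≠ 1 → G.degree v = 3) {a b : V} (hab : G.Adj a b) :
    ∃ w, G.degree w = 1 ∧ G.dist a w < G.dist b w := by
  set S : Finset V := univ.filter (fun w => G.dist a w < G.dist b w) with hS
  have haS : a ∈ S := by
    simp only [hS, mem_filter, mem_univ, true_and]
    rw [SimpleGraph.dist_self, dist_eq_one_iff_adj.mpr hab.symm]
    omega
  obtain ⟨w, hwS, hwmax⟩ := S.exists_max_image (fun w => G.dist b w) ⟨a, haS⟩
  rw [hS, mem_filter] at hwS
  refine ⟨w, ?_, hwS.2⟩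
  by_contra hwleaf
  have hdw : G.degree w = 3 := hdeg w hwleaf
  have hbw : b ≠ w := by
    rintro rfl
    simp [SimpleGraph.dist_self] at hwS
  obtain ⟨z, hz, hzd⟩ := exists_down G hT hbw
  have hzmem : z ∈ G.neighborFinset w := by rw [mem_neighborFinset]; exact hz.symm
  have hcard : 1 < (G.neighborFinset w).card := by rw [card_neighborFinset_eq_degree, hdw]; omega
  obtain ⟨z', hz'mem, hz'ne⟩ := Finset.exists_mem_ne hcard z
  rw [mem_neighborFinset] at hz'mem
  have hne : G.dist w b < G.dist z' b ∨ G.dist z' b < G.dist w b :=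
    dist_lt_or_lt G hT hz'mem b
  have htri1 : G.dist b z' ≤ G.dist b w + 1 := dist_adj_le G hT hz'mem b
  have htri2 : G.dist b w ≤ G.dist b z' + 1 := dist_adj_le G hT hz'mem.symm b
  have hcw : G.dist w b = G.dist b w := SimpleGraph.dist_comm ..
  have hcz : G.dist z' b = G.dist b z' := SimpleGraph.dist_comm ..
  have hnotdown : ¬ (G.dist b z' + 1 = G.dist b w) := by
    intro hdown
    exact unique_down G hT hz'mem (hz := hz'ne) hz.symm hdown hzd
  have hup : G.dist b z' = G.dist b w + 1 := by omega
  have hz'S : z' ∈ S := by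
    simp only [hS, mem_filter, mem_univ, true_and]
    have : G.dist a z' ≤ G.dist a w + 1 := dist_adj_le G hT hz'mem a
    omega
  have := hwmax z' hz'S
  omega

/-- If `x` is a leaf with neighbor `v`, the only leaf on `x`'s side is `x` itself. -/
lemma leaf_side_subset (G : SimpleGraph V) [DecidableRel G.Adj] (hT : G.IsTree)
    {x v : V} (hxv : G.Adj x v) (hx : G.degree x = 1) (w : V)
    (hw : G.dist x w < G.dist v w) : w = x := by
  by_contra hwx
  obtain ⟨z, hz, hzd⟩ := exists_down G hT (b := w) (w := x) hwx
  have hnb : ({v} : Finset V) = G.neighborFinset x := by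
    apply Finset.eq_of_subset_of_card_le
    · rw [Finset.singleton_subset_iff, mem_neighborFinset]; exact hxv
    · rw [card_neighborFinset_eq_degree, hx, Finset.card_singleton]
  have hzv : z = v := by
    have hmem : z ∈ G.neighborFinset x := by rw [mem_neighborFinset]; exact hz.symm
    rw [← hnb, Finset.mem_singleton] at hmem
    exact hmem
  rw [hzv] at hzd
  have h1 : G.dist w v = G.dist v w := SimpleGraph.dist_comm ..
  have h2 : G.dist w x = G.dist x w := SimpleGraph.dist_comm ..
  omega

/-- Splitting the `v`-side of the edge `uv` at the degree-3 vertex `v`. -/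
lemma side_split (G : SimpleGraph V) [DecidableRel G.Adj] (hT : G.IsTree) {u v x y : V}
    (huv : G.Adj u v) (hvx : G.Adj v x) (hvy : G.Adj v y)
    (hnf : G.neighborFinset v = {u, x, y}) (hux : x ≠ u) (huy : y ≠ u) (hxy : x ≠ y)
    (w : V) (hwv : w ≠ v) :
    G.dist v w < G.dist u w ↔ (G.dist x w < G.dist v w ∨ G.dist y w < G.dist v w) := by
  constructor
  · intro hlt
    obtain ⟨z, hz, hzd⟩ := exists_down G hT (b := w) (w := v) hwv
    have hzmem : z ∈ G.neighborFinset v := by rw [mem_neighborFinset]; exact hz.symm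
    rw [hnf] at hzmem
    simp only [Finset.mem_insert, Finset.mem_singleton] at hzmem
    have hzu : z ≠ u := by
      intro he
      have c1 : G.dist w u = G.dist u w := SimpleGraph.dist_comm ..
      have c2 : G.dist w v = G.dist v w := SimpleGraph.dist_comm ..
      rw [he] at hzd
      omega
    have e1 : G.dist w z = G.dist z w := SimpleGraph.dist_comm ..
    have e2 : G.dist w v = G.dist v w := SimpleGraph.dist_comm ..
    rcases hzmem with rfl | rfl | rfl
    · exact absurd rfl hzu
    · left; omega
    · right; omega
  · intro hor
    rcases dist_lt_or_lt G hT huv w with h | h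
    · exfalso
      have hdu : G.dist w u + 1 = G.dist w v := down_of_lt G hT huv w h
      rcases hor with hx' | hy'
      · exact unique_down G hT (h1 := huv.symm) (h2 := hvx) hux.symm hdu
          (down_of_lt G hT hvx.symm w hx')
      · exact unique_down G hT (h1 := huv.symm) (h2 := hvy) huy.symm hdu
          (down_of_lt G hT hvy.symm w hy')
    · exact h

/-- Two distinct neighbors cannot both be strictly closer to `w`. -/
lemma not_both_down (G : SimpleGraph V) (hT : G.IsTree) {v x y : V}
    (hvx : G.Adj v x) (hvy : G.Adj v y) (hxy : x ≠ y) (w : V) :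
    ¬ (G.dist x w < G.dist v w ∧ G.dist y w < G.dist v w) := by
  rintro ⟨h1, h2⟩
  exact unique_down G hT hvx hvy hxy (down_of_lt G hT hvx.symm w h1)
    (down_of_lt G hT hvy.symm w h2)

/-- A tree with ≥ 4 leaves (all internal vertices of degree 3) has an internal edge. -/
lemma exists_internal_edge (G : SimpleGraph V) [DecidableRel G.Adj] (hT : G.IsTree)
    (hdeg : ∀ v : V, G.degree v ≠ 1 → G.degree v = 3)
    (k : ℕ) (hk : k = (Finset.univ.filter fun v => G.degree v = 1).card) (hk4 : 4 ≤ k) :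
    ∃ u v : V, G.Adj u v ∧ G.degree u ≠ 1 ∧ G.degree v ≠ 1 := by
  have hcardV : (Finset.univ.filter fun v : V => G.degree v = 1).card ≤ Fintype.card V :=
    le_trans (Finset.card_le_card (Finset.subset_univ _)) (le_of_eq (Finset.card_univ))
  by_cases hex : ∃ v : V, G.degree v ≠ 1
  · obtain ⟨v, hv⟩ := hex
    by_cases hex2 : ∃ u ∈ G.neighborFinset v, G.degree u ≠ 1
    · obtain ⟨u, hu, hu1⟩ := hex2
      rw [mem_neighborFinset] at hu
      exact ⟨u, v, hu.symm, hu1, hv⟩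
    · exfalso
      push_neg at hex2
      have hdv : G.degree v = 3 := hdeg v hv
      have hall : ∀ w : V, w = v ∨ G.Adj v w := by
        intro w
        obtain ⟨p, hp, hl⟩ := hT.isConnected.exists_path_of_dist v w
        cases p with
        | nil => exact Or.inl rfl
        | @cons _ z _ h q =>
          cases q with
          | nil => exact Or.inr h
          | @cons _ z' _ h' q' =>
            exfalso
            have hzleaf : G.degree z = 1 := by
              by_contra hzl
              exact hzl (hex2 z (by rw [mem_neighborFinset]; exact h))
            have hnb : ({v} : Finset V) = G.neighborFinset z := by
              apply Finset.eq_of_subset_of_card_le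
              · rw [Finset.singleton_subset_iff, mem_neighborFinset]; exact h.symm
              · rw [card_neighborFinset_eq_degree, hzleaf, Finset.card_singleton]
            have hz'v : z' = v := by
              have hmem : z' ∈ G.neighborFinset z := by rw [mem_neighborFinset]; exact h'
              rw [← hnb, Finset.mem_singleton] at hmem
              exact hmem
            subst hz'v
            have hnd := hp.support_nodup
            rw [SimpleGraph.Walk.support_cons, SimpleGraph.Walk.support_cons] at hnd
            rw [List.nodup_cons] at hnd
            exact hnd.1 (by simp [SimpleGraph.Walk.start_mem_support])
      have hsub : (Finset.univ.filter fun w : V => G.degree w = 1) ⊆ G.neighborFinset v := by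
        intro w hw
        rw [Finset.mem_filter] at hw
        rcases hall w with rfl | h
        · exact absurd hw.2 hv
        · rw [mem_neighborFinset]; exact h
      have := Finset.card_le_card hsub
      rw [card_neighborFinset_eq_degree, hdv, ← hk] at this
      omega
  · exfalso
    push_neg at hex
    have hsum : ∑ v : V, G.degree v = 2 * G.edgeFinset.card :=
      SimpleGraph.sum_degrees_eq_twice_card_edges G
    have hone : ∑ v : V, G.degree v = Fintype.card V := by
      rw [Finset.sum_congr rfl (fun v _ => hex v), Finset.sum_const, Finset.card_univ,
        smul_eq_mul, mul_one]
    have hedge : G.edgeFinset.card + 1 = Fintype.card V := hT.card_edgeFinset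
    omega

end StmtFiveAux

/-- In a finite tree all of whose internal vertices have degree 3
and with `k ≥ 4` leaves, there is an edge `uv` with both endpoints internal whose
deletion splits the tree into two parts each containing (with the new leaf at the
endpoint counted) at most `2k/3 + 1` leaves. -/
theorem stmt5 (G : SimpleGraph V) [DecidableRel G.Adj] (hT : G.IsTree)
    (hdeg : ∀ v : V, G.degree v ≠ 1 → G.degree v = 3)
    (k : ℕ) (hk : k = (Finset.univ.filter fun v => G.degree v = 1).card) (hk4 : 4 ≤ k) :
    ∃ u v : V, G.Adj u v ∧ G.degree u ≠ 1 ∧ G.degree v ≠ 1 ∧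
      (({w : V | G.degree w = 1 ∧ (G.deleteEdges {s(u, v)}).Reachable u w}.ncard + 1 : ℝ)
          ≤ 2 * k / 3 + 1) ∧
      (({w : V | G.degree w = 1 ∧ (G.deleteEdges {s(u, v)}).Reachable v w}.ncard + 1 : ℝ)
          ≤ 2 * k / 3 + 1) := by
  classical
  set L : Finset V := Finset.univ.filter (fun v => G.degree v = 1) with hL
  set A : V → V → ℕ := fun a b => (L.filter (fun w => G.dist a w < G.dist b w)).card with hA
  -- basic counting facts
  have hsum : ∀ a b : V, G.Adj a b → A a b + A b a = k := by
    intro a b hab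
    have hcongr : L.filter (fun w => ¬ G.dist a w < G.dist b w)
        = L.filter (fun w => G.dist b w < G.dist a w) :=
      Finset.filter_congr (fun w _ => by have := dist_lt_or_lt G hT hab w; constructor <;> omega)
    have hpart := Finset.card_filter_add_card_filter_not
      (s := L) (p := fun w => G.dist a w < G.dist b w)
    rw [hcongr] at hpart
    rw [hA]
    simp only
    rw [hpart, hk, hL]
  have hpos : ∀ a b : V, G.Adj a b → 1 ≤ A a b := by
    intro a b hab
    obtain ⟨w, hw1, hw2⟩ := exists_leaf_side G hT hdeg hab
    apply Finset.card_pos.mpr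
    exact ⟨w, Finset.mem_filter.mpr ⟨Finset.mem_filter.mpr ⟨Finset.mem_univ _, hw1⟩, hw2⟩⟩
  have hleafside : ∀ x v : V, G.Adj x v → G.degree x = 1 → A x v ≤ 1 := by
    intro x v hxv hx
    have hsub : L.filter (fun w => G.dist x w < G.dist v w) ⊆ {x} := by
      intro w hw
      rw [Finset.mem_filter] at hw
      rw [Finset.mem_singleton]
      exact leaf_side_subset G hT hxv hx w hw.2
    calc (L.filter (fun w => G.dist x w < G.dist v w)).card
        ≤ ({x} : Finset V).card := Finset.card_le_card hsub
      _ = 1 := Finset.card_singleton x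
  -- the finset of internal (ordered) edges
  set P : Finset (V × V) := (Finset.univ ×ˢ Finset.univ).filter
    (fun p => G.Adj p.1 p.2 ∧ G.degree p.1 ≠ 1 ∧ G.degree p.2 ≠ 1) with hP
  have hPne : P.Nonempty := by
    obtain ⟨u, v, h1, h2, h3⟩ := exists_internal_edge G hT hdeg k hk hk4
    exact ⟨(u, v), by rw [hP, Finset.mem_filter]; exact ⟨by simp, h1, h2, h3⟩⟩
  obtain ⟨⟨u, v⟩, hmemP, hmin⟩ := P.exists_min_image (fun p => max (A p.1 p.2) (A p.2 p.1)) hPne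
  rw [hP, Finset.mem_filter] at hmemP
  obtain ⟨-, hadj, hu1, hv1⟩ := hmemP
  -- the key bound for a minimizing internal edge
  have key : ∀ a b : V, G.Adj a b → G.degree a ≠ 1 → G.degree b ≠ 1 →
      max (A a b) (A b a) ≤ max (A u v) (A v u) → 3 * A b a ≤ 2 * k := by
    intro a b hab ha1 hb1 hmle
    by_contra hcon
    push_neg at hcon
    have hsab := hsum a b hab
    have hdb : G.degree b = 3 := hdeg b hb1
    have hanb : a ∈ G.neighborFinset b := (SimpleGraph.mem_neighborFinset _ _ _).mpr hab.symm
    have hcard3 : (G.neighborFinset b).card = 3 := by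
      rw [SimpleGraph.card_neighborFinset_eq_degree, hdb]
    have hcard2 : ((G.neighborFinset b).erase a).card = 2 := by
      rw [Finset.card_erase_of_mem hanb, hcard3]
    obtain ⟨x, y, hxy, hexy⟩ := Finset.card_eq_two.mp hcard2
    have hxe : x ∈ (G.neighborFinset b).erase a := by rw [hexy]; simp
    have hye : y ∈ (G.neighborFinset b).erase a := by rw [hexy]; simp
    have hxa : x ≠ a := Finset.ne_of_mem_erase hxe
    have hya : y ≠ a := Finset.ne_of_mem_erase hye
    have hbx : G.Adj b x := (SimpleGraph.mem_neighborFinset _ _ _).mp (Finset.mem_of_mem_erase hxe)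
    have hby : G.Adj b y := (SimpleGraph.mem_neighborFinset _ _ _).mp (Finset.mem_of_mem_erase hye)
    have hnf : G.neighborFinset b = {a, x, y} := by
      rw [show ({a, x, y} : Finset V) = insert a {x, y} from rfl, ← hexy,
        Finset.insert_erase hanb]
    have main : ∀ x y : V, G.Adj b x → G.Adj b y → x ≠ a → y ≠ a → x ≠ y →
        G.neighborFinset b = {a, x, y} → A y b ≤ A x b → False := by
      intro x y hbx hby hxa hya hxy hnf hyx
      -- the split A b a = A x b + A y b
      have hsplit : A b a = A x b + A y b := by
        have hset : L.filter (fun w => G.dist b w < G.dist a w)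
            = L.filter (fun w => G.dist x w < G.dist b w)
              ∪ L.filter (fun w => G.dist y w < G.dist b w) := by
          ext w
          simp only [Finset.mem_union, Finset.mem_filter]
          constructor
          · rintro ⟨hwL, hlt⟩
            have hwb : w ≠ b := by
              intro he
              rw [hL, Finset.mem_filter] at hwL
              rw [he] at hwL
              exact hb1 hwL.2
            rcases (side_split G hT hab hbx hby hnf hxa hya hxy w hwb).mp hlt with h | h
            · exact Or.inl ⟨hwL, h⟩
            · exact Or.inr ⟨hwL, h⟩
          · intro h
            have hwL : w ∈ L := by rcases h with ⟨h, _⟩ | ⟨h, _⟩ <;> exact h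
            have hwb : w ≠ b := by
              intro he
              rw [hL, Finset.mem_filter] at hwL
              rw [he] at hwL
              exact hb1 hwL.2
            refine ⟨hwL, (side_split G hT hab hbx hby hnf hxa hya hxy w hwb).mpr ?_⟩
            rcases h with ⟨_, h⟩ | ⟨_, h⟩
            · exact Or.inl h
            · exact Or.inr h
        have hdisj : Disjoint (L.filter (fun w => G.dist x w < G.dist b w))
            (L.filter (fun w => G.dist y w < G.dist b w)) := by
          rw [Finset.disjoint_left]
          intro w hw1 hw2
          rw [Finset.mem_filter] at hw1 hw2
          exact not_both_down G hT hbx hby hxy w ⟨hw1.2, hw2.2⟩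
        rw [hA]
        simp only
        rw [hset, Finset.card_union_of_disjoint hdisj]
      have hy1 : 1 ≤ A y b := hpos y b hby.symm
      have hkx : k < 3 * A x b := by omega
      have hx2 : 2 ≤ A x b := by omega
      have hxleaf : G.degree x ≠ 1 := by
        intro hxl
        have := hleafside x b hbx.symm hxl
        omega
      have hxbP : (x, b) ∈ P := by
        rw [hP, Finset.mem_filter]
        exact ⟨by simp, hbx.symm, hxleaf, hb1⟩
      have hminxb := hmin (x, b) hxbP
      simp only at hminxb
      have hsxb := hsum x b hbx.symm
      have h1' : A x b < A b a := by omega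
      have h2' : A b x < A b a := by omega
      have hmax1 : max (A x b) (A b x) < A b a := max_lt h1' h2'
      have hmax2 : A b a ≤ max (A a b) (A b a) := le_max_right _ _
      omega
    rcases le_total (A y b) (A x b) with h | h
    · exact main x y hbx hby hxa hya hxy hnf h
    · apply main y x hby hbx hya hxa (Ne.symm hxy) ?_ h
      rw [hnf]
      ext t
      simp only [Finset.mem_insert, Finset.mem_singleton]
      tauto
  have hAvu : 3 * A v u ≤ 2 * k := key u v hadj hu1 hv1 (le_refl _)
  have hAuv : 3 * A u v ≤ 2 * k := key v u hadj.symm hv1 hu1 (le_of_eq (max_comm _ _))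
  refine ⟨u, v, hadj, hu1, hv1, ?_, ?_⟩
  · have hsetu : {w : V | G.degree w = 1 ∧ (G.deleteEdges {s(u, v)}).Reachable u w}
        = ↑(L.filter (fun w => G.dist u w < G.dist v w)) := by
      ext w
      simp only [Set.mem_setOf_eq, Finset.coe_filter, Finset.mem_filter, hL,
        Finset.mem_univ, true_and]
      rw [reach_iff_dist G hT hadj w]
    rw [hsetu, Set.ncard_coe_finset]
    have hc : ((3 * A u v : ℕ) : ℝ) ≤ ((2 * k : ℕ) : ℝ) := Nat.cast_le.mpr hAuv
    push_cast at hc ⊢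
    linarith
  · have hsetv : {w : V | G.degree w = 1 ∧ (G.deleteEdges {s(u, v)}).Reachable v w}
        = ↑(L.filter (fun w => G.dist v w < G.dist u w)) := by
      ext w
      simp only [Set.mem_setOf_eq, Finset.coe_filter, Finset.mem_filter, hL,
        Finset.mem_univ, true_and]
      rw [Sym2.eq_swap, reach_iff_dist G hT hadj.symm w]
    rw [hsetv, Set.ncard_coe_finset]
    have hc : ((3 * A v u : ℕ) : ℝ) ≤ ((2 * k : ℕ) : ℝ) := Nat.cast_le.mpr hAvu
    push_cast at hc ⊢
    linarith
end

section
/- Let T be a finite tree with L leaves, and suppose every vertex of degree 2 in T is a leaf of at least one member of a given family {T_s : s ∈ S} of subtrees of T, where each T_s has at most L leaves. If |S| = σ, then the number of vertices of T is O(σ·L); in particular, if L = O(σ), then |V(T)| = O(σ²). -/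
open Finset

variable {V : Type*} [Fintype V] [DecidableEq V]

/-- If every degree-2 vertex of a finite tree `T` is a leaf of some
member of a family of `σ` subtrees, each of which has at most `L` leaves (`L` being
the number of leaves of `T`), then `|V(T)| ≤ σ·L + 2L + 1 = O(σ·L)`. -/
theorem stmt6 {S : Type*} [Fintype S]
    (G : SimpleGraph V) [DecidableRel G.Adj] (hT : G.IsTree)
    (Ts : S → Set V)
    (hsub : ∀ s, (G.induce (Ts s)).Connected)
    (L : ℕ) (hL : L = (Finset.univ.filter fun v => G.degree v = 1).card)
    (hTsLeaves : ∀ s : S, {v | v ∈ Ts s ∧ {u | u ∈ Ts s ∧ G.Adj v u}.ncard ≤ 1}.ncard ≤ L)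
    (hdeg2 : ∀ v : V, G.degree v = 2 →
      ∃ s : S, v ∈ Ts s ∧ {u | u ∈ Ts s ∧ G.Adj v u}.ncard ≤ 1) :
    Fintype.card V ≤ Fintype.card S * L + 2 * L + 1 := by
  classical
  rcases le_or_gt (Fintype.card V) 1 with hn | hn
  · exact hn.trans (Nat.le_add_left 1 _)
  have hdegpos : ∀ v : V, 0 < G.degree v := by
    intro v
    rw [G.degree_pos_iff_exists_adj v]
    obtain ⟨w, hw⟩ := Fintype.exists_ne_of_one_lt_card hn v
    obtain ⟨p⟩ := hT.isConnected.preconnected v w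
    have hnn : ¬ p.Nil := SimpleGraph.Walk.not_nil_of_ne hw.symm
    exact ⟨p.getVert 1, p.adj_snd hnn⟩
  set n1 := (univ.filter fun v => G.degree v = 1).card with hn1
  set n2 := (univ.filter fun v => G.degree v = 2).card with hn2
  set n3 := (univ.filter fun v => 3 ≤ G.degree v).card with hn3
  have hcard : Fintype.card V ≤ n1 + (n2 + n3) := by
    rw [hn1, hn2, hn3, Finset.card_filter, Finset.card_filter, Finset.card_filter,
      ← Finset.sum_add_distrib, ← Finset.sum_add_distrib]
    calc Fintype.card V = ∑ _v : V, 1 := by simp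
      _ ≤ _ := Finset.sum_le_sum fun v _ => by
          have := hdegpos v; split_ifs <;> omega
  have hsum : n1 + 2 * n2 + 3 * n3 ≤ 2 * (Fintype.card V - 1) := by
    have h2 : ∑ v : V, G.degree v = 2 * (Fintype.card V - 1) := by
      have h3 := hT.card_edgeFinset
      have h4 := G.sum_degrees_eq_twice_card_edges
      omega
    calc n1 + 2 * n2 + 3 * n3
        = ∑ v : V, ((if G.degree v = 1 then 1 else 0)
          + 2 * (if G.degree v = 2 then 1 else 0)
          + 3 * (if 3 ≤ G.degree v then 1 else 0)) := by
          rw [hn1, hn2, hn3, Finset.card_filter, Finset.card_filter, Finset.card_filter]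
          simp only [Finset.sum_add_distrib, Finset.mul_sum]
      _ ≤ ∑ v : V, G.degree v := Finset.sum_le_sum fun v _ => by
          have := hdegpos v; split_ifs <;> omega
      _ = _ := h2
  have hn2L : n2 ≤ Fintype.card S * L := by
    have hsubU : (univ.filter fun v => G.degree v = 2) ⊆ univ.biUnion
        (fun s : S => (Set.toFinite {v | v ∈ Ts s ∧ {u | u ∈ Ts s ∧ G.Adj v u}.ncard ≤ 1}).toFinset) := by
      intro v hv
      simp only [Finset.mem_filter] at hv
      obtain ⟨s, hs⟩ := hdeg2 v hv.2
      simp only [Finset.mem_biUnion, Set.Finite.mem_toFinset]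
      exact ⟨s, Finset.mem_univ s, hs⟩
    calc n2 ≤ _ := Finset.card_le_card hsubU
      _ ≤ ∑ s : S, (Set.toFinite {v | v ∈ Ts s ∧ {u | u ∈ Ts s ∧ G.Adj v u}.ncard ≤ 1}).toFinset.card :=
          Finset.card_biUnion_le
      _ ≤ ∑ _s : S, L := Finset.sum_le_sum fun s _ => by
          rw [← Set.ncard_eq_toFinset_card]; exact hTsLeaves s
      _ = Fintype.card S * L := by simp [mul_comm]
  obtain ⟨K, hK⟩ : ∃ K, Fintype.card S * L = K := ⟨_, rfl⟩
  rw [hK] at hn2L ⊢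
  omega
end

section
/- Let C ⊆ 2^S be a cross-free family on a finite set S (for all A, B ∈ C: A ⊆ B or B ⊆ A or A ∩ B = ∅ or A ∪ B = S). Then |C| ≤ 4|S| − 2 (in particular, |C| = O(|S|)). -/
/-- A laminar family of nonempty subsets of `U` has at most `2|U| - 1` members. -/
lemma laminar_bound {S : Type*} [DecidableEq S] :
    ∀ n : ℕ, ∀ U : Finset S, U.card ≤ n → ∀ F : Finset (Finset S),
    (∀ A ∈ F, A ⊆ U) → (∀ A ∈ F, A ≠ ∅) →
    (∀ A ∈ F, ∀ B ∈ F, A ⊆ B ∨ B ⊆ A ∨ A ∩ B = ∅) →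
    F.card ≤ 2 * U.card - 1 := by
  intro n
  induction n with
  | zero =>
    intro U hU F hsub hne _
    have hU0 : U = ∅ := Finset.card_eq_zero.mp (Nat.le_zero.mp hU)
    have : F = ∅ := by
      rw [Finset.eq_empty_iff_forall_notMem]
      intro A hA
      exact hne A hA (Finset.subset_empty.mp (hU0 ▸ hsub A hA))
    simp [this]
  | succ n ih =>
    intro U hU F hsub hne hlam
    set F' := F.erase U with hF'
    have hcard : F.card ≤ F'.card + 1 := by
      by_cases hUF : U ∈ F
      · rw [hF', Finset.card_erase_of_mem hUF]; omega
      · rw [hF', Finset.erase_eq_of_notMem hUF]; omega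
    rcases F'.eq_empty_or_nonempty with hFe | hFn
    · rw [hFe] at hcard
      simp only [Finset.card_empty] at hcard
      rcases F.eq_empty_or_nonempty with hFE | ⟨A, hA⟩
      · simp [hFE]
      · have hAne := hne A hA
        have : 1 ≤ U.card := by
          obtain ⟨x, hx⟩ := Finset.nonempty_iff_ne_empty.mpr hAne
          exact Finset.card_pos.mpr ⟨x, hsub A hA hx⟩
        omega
    · obtain ⟨M, hMF', hMmax⟩ := F'.exists_maximal hFn
      have hMF : M ∈ F := Finset.mem_of_mem_erase hMF'
      have hMU : M ⊆ U := hsub M hMF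
      have hMneU : M ≠ U := Finset.ne_of_mem_erase hMF'
      have hMssU : M ⊂ U := hMU.ssubset_of_ne hMneU
      have hMne : M ≠ ∅ := hne M hMF
      -- split F' into subsets of M and sets disjoint from M
      have hsplit : ∀ A ∈ F', A ⊆ M ∨ A ∩ M = ∅ := by
        intro A hA'
        have hA : A ∈ F := Finset.mem_of_mem_erase hA'
        rcases hlam A hA M hMF with h | h | h
        · exact Or.inl h
        · rcases eq_or_ne A M with rfl | hAM
          · exact Or.inl subset_rfl
          · exact absurd (Finset.Subset.antisymm (hMmax hA' h) h) hAM
        · exact Or.inr h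
      set F₁ := F'.filter (· ⊆ M) with hF₁
      set F₂ := F'.filter (fun A => A ∩ M = ∅) with hF₂
      have hunion : F' ⊆ F₁ ∪ F₂ := by
        intro A hA
        rcases hsplit A hA with h | h
        · exact Finset.mem_union_left _ (Finset.mem_filter.mpr ⟨hA, h⟩)
        · exact Finset.mem_union_right _ (Finset.mem_filter.mpr ⟨hA, h⟩)
      have h12 : F'.card ≤ F₁.card + F₂.card :=
        (Finset.card_le_card hunion).trans (Finset.card_union_le _ _)
      have hMcard : M.card < U.card := Finset.card_lt_card hMssU
      have hb1 : F₁.card ≤ 2 * M.card - 1 := by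
        apply ih M (by omega)
        · intro A hA; exact (Finset.mem_filter.mp hA).2
        · intro A hA; exact hne A (Finset.mem_of_mem_erase (Finset.mem_filter.mp hA).1)
        · intro A hA B hB
          rcases hlam A (Finset.mem_of_mem_erase (Finset.mem_filter.mp hA).1)
            B (Finset.mem_of_mem_erase (Finset.mem_filter.mp hB).1) with h | h | h
          · exact Or.inl h
          · exact Or.inr (Or.inl h)
          · exact Or.inr (Or.inr h)
      have hb2 : F₂.card ≤ 2 * (U \ M).card - 1 := by
        apply ih (U \ M)
        · have : (U \ M).card = U.card - M.card := Finset.card_sdiff_of_subset hMU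
          have hM1 : 1 ≤ M.card := Finset.card_pos.mpr (Finset.nonempty_iff_ne_empty.mpr hMne)
          omega
        · intro A hA
          obtain ⟨hA', hdisj⟩ := Finset.mem_filter.mp hA
          intro x hx
          refine Finset.mem_sdiff.mpr ⟨hsub A (Finset.mem_of_mem_erase hA') hx, ?_⟩
          intro hxM
          have : x ∈ A ∩ M := Finset.mem_inter.mpr ⟨hx, hxM⟩
          simp [hdisj] at this
        · intro A hA; exact hne A (Finset.mem_of_mem_erase (Finset.mem_filter.mp hA).1)
        · intro A hA B hB
          exact hlam A (Finset.mem_of_mem_erase (Finset.mem_filter.mp hA).1)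
            B (Finset.mem_of_mem_erase (Finset.mem_filter.mp hB).1)
      have hsd : (U \ M).card = U.card - M.card := Finset.card_sdiff_of_subset hMU
      have hM1 : 1 ≤ M.card := Finset.card_pos.mpr (Finset.nonempty_iff_ne_empty.mpr hMne)
      omega

/-- A cross-free family of subsets of a finite set `S`, not
containing `∅` or `S`, has at most `4|S| − 2` members. -/
theorem stmt14 {S : Type*} [Fintype S] [DecidableEq S] (C : Finset (Finset S))
    (hcf : ∀ A ∈ C, ∀ B ∈ C, A ⊆ B ∨ B ⊆ A ∨ A ∩ B = ∅ ∨ A ∪ B = Finset.univ)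
    (h0 : ∅ ∉ C) (h1 : Finset.univ ∉ C) :
    C.card ≤ 4 * Fintype.card S - 2 := by
  rcases isEmpty_or_nonempty S with hS | hS
  · have : C = ∅ := by
      rw [Finset.eq_empty_iff_forall_notMem]
      intro A hA
      have : A = ∅ := Finset.eq_empty_of_isEmpty A
      exact h0 (this ▸ hA)
    simp [this]
  · obtain ⟨s⟩ := hS
    set f : Finset S → Finset S := fun A => if s ∈ A then Aᶜ else A with hf
    set D := C.image f with hD
    -- basic facts about f
    have hfs : ∀ A, s ∉ f A := by
      intro A
      by_cases h : s ∈ A <;> simp [hf, h]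
    have hfne : ∀ A ∈ C, f A ≠ ∅ := by
      intro A hA
      by_cases h : s ∈ A
      · simp only [hf, if_pos h]
        intro hc
        have : A = Finset.univ := by
          have := congrArg compl hc
          simpa using this
        exact h1 (this ▸ hA)
      · simp only [hf, if_neg h]
        intro hc; exact h0 (hc ▸ hA)
    -- D is laminar
    have hlam : ∀ A ∈ C, ∀ B ∈ C, f A ⊆ f B ∨ f B ⊆ f A ∨ f A ∩ f B = ∅ := by
      intro A hA B hB
      have hcross := hcf A hA B hB
      by_cases ha : s ∈ A <;> by_cases hb : s ∈ B <;>
        simp only [hf, if_pos, if_neg, ha, hb, if_true, if_false]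
      · -- both complemented
        rcases hcross with h | h | h | h
        · exact Or.inr (Or.inl (Finset.compl_subset_compl.mpr h))
        · exact Or.inl (Finset.compl_subset_compl.mpr h)
        · exact absurd (Finset.eq_empty_iff_forall_notMem.mp h s)
            (by simp [Finset.mem_inter, ha, hb])
        · refine Or.inr (Or.inr ?_)
          rw [← Finset.compl_union, h, Finset.compl_univ]
      · -- A complemented, B not
        rcases hcross with h | h | h | h
        · exact absurd (h ha) hb
        · refine Or.inr (Or.inr ?_)
          rw [Finset.eq_empty_iff_forall_notMem]
          intro x hx
          obtain ⟨hx1, hx2⟩ := Finset.mem_inter.mp hx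
          exact (Finset.mem_compl.mp hx1) (h hx2)
        · refine Or.inr (Or.inl ?_)
          intro x hx
          rw [Finset.mem_compl]
          intro hxA
          have : x ∈ A ∩ B := Finset.mem_inter.mpr ⟨hxA, hx⟩
          simp [h] at this
        · refine Or.inl ?_
          intro x hx
          have := Finset.mem_compl.mp hx
          have hxu : x ∈ A ∪ B := h ▸ Finset.mem_univ x
          rcases Finset.mem_union.mp hxu with h' | h'
          · exact absurd h' this
          · exact h'
      · -- B complemented, A not
        rcases hcross with h | h | h | h
        · refine Or.inr (Or.inr ?_)
          rw [Finset.eq_empty_iff_forall_notMem]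
          intro x hx
          obtain ⟨hx1, hx2⟩ := Finset.mem_inter.mp hx
          exact (Finset.mem_compl.mp hx2) (h hx1)
        · exact absurd (h hb) ha
        · refine Or.inl ?_
          intro x hx
          rw [Finset.mem_compl]
          intro hxB
          have : x ∈ A ∩ B := Finset.mem_inter.mpr ⟨hx, hxB⟩
          simp [h] at this
        · refine Or.inr (Or.inl ?_)
          intro x hx
          have := Finset.mem_compl.mp hx
          have hxu : x ∈ A ∪ B := h ▸ Finset.mem_univ x
          rcases Finset.mem_union.mp hxu with h' | h'
          · exact h'
          · exact absurd h' this
      · -- neither complemented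
        rcases hcross with h | h | h | h
        · exact Or.inl h
        · exact Or.inr (Or.inl h)
        · exact Or.inr (Or.inr h)
        · exact absurd (h ▸ Finset.mem_univ s : s ∈ A ∪ B)
            (by simp [Finset.mem_union, ha, hb])
    -- laminar bound on D
    have hDbound : D.card ≤ 2 * Fintype.card S - 1 := by
      rw [← Finset.card_univ]
      apply laminar_bound (Finset.univ.card) Finset.univ le_rfl
      · intro A _; exact Finset.subset_univ A
      · intro A hA
        obtain ⟨B, hB, rfl⟩ := Finset.mem_image.mp hA
        exact hfne B hB
      · intro A hA B hB
        obtain ⟨A', hA', rfl⟩ := Finset.mem_image.mp hA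
        obtain ⟨B', hB', rfl⟩ := Finset.mem_image.mp hB
        exact hlam A' hA' B' hB'
    -- fibers of f have size at most 2
    have hfiber : C.card ≤ 2 * D.card := by
      apply Finset.card_le_mul_card_image
      intro b _
      have hsub : {a ∈ C | f a = b} ⊆ {b, bᶜ} := by
        intro A hA
        obtain ⟨_, hfA⟩ := Finset.mem_filter.mp hA
        by_cases h : s ∈ A
        · simp only [hf, if_pos h] at hfA
          have : A = bᶜ := by
            have := congrArg compl hfA
            simpa using this
          simp [this]
        · simp only [hf, if_neg h] at hfA
          simp [hfA]
      calc {a ∈ C | f a = b}.card ≤ ({b, bᶜ} : Finset (Finset S)).card :=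
            Finset.card_le_card hsub
        _ ≤ 2 := Finset.card_insert_le _ _ |>.trans (by simp)
    have hcard1 : 1 ≤ Fintype.card S := Fintype.card_pos_iff.mpr ⟨s⟩
    omega
end
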